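/- arXiv:1307.1996 — 4 statements merged into one kernel-verified Lean document; each statement's English description precedes it below -/
import Mathlib

section
/- Let S ⊆ Q_{d-1} be (d-1, m/2)-edge equitable with m even, viewed inside Q_d via the embedding fixing the last coordinate to 0. Then S ∪ {t ⊕ e_1 ⊕ e_d : t ∈ S} is (d, m)-edge equitable. -/
/-- Vertices of the hypercube `Q_d`. -/
abbrev Vtx (d : ℕ) := Fin d → ZMod 2

/-- The `i`-th standard basis vector of `(ZMod 2)^d`. -/
def eV {d : ℕ} (i : Fin d) : Vtx d := Pi.single i 1

/-- The number of edges of `Q_d` in direction `i` whose two endpoints both lie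
in `S`, i.e. the number of pairs `{t, t ⊕ e_i} ⊆ S`. -/
def edgeCount {d : ℕ} (S : Finset (Vtx d)) (i : Fin d) : ℕ :=
  (S.filter fun t => t i = 0 ∧ t + eV i ∈ S).card

/-- `S ⊆ Q_d` is a `(d,m)`-edge equitable design: exactly `m` edges of the
induced subgraph in each direction. -/
def Equitable {d : ℕ} (S : Finset (Vtx d)) (m : ℕ) : Prop :=
  ∀ i : Fin d, edgeCount S i = m

/-- Embedding of `Q_d` into `Q_{d+1}` fixing the last coordinate to `0`. -/
def emb {d : ℕ} (t : Vtx d) : Vtx (d + 1) := Fin.snoc t 0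

/-!
Let `A` be the copy of `S` in the layer `x_d = 0` and `B = A + e_j + e_d` its translate, which
lies in the layer `x_d = 1`. In a direction `i < d` no edge joins the two layers, and translation
preserves edges, so each layer contributes `k` edges. In direction `d`, the vertex `emb s ∈ A` is
joined to `B` exactly when `s + e_j ∈ S`, and such `s` count every `j`-edge of `S` from both of
its endpoints, giving `2k`.
-/

open Finset

section EdgeCount

variable {d : ℕ}

lemma add_eV_apply_self (t : Vtx d) (i : Fin d) : (t + eV i) i = t i + 1 := by
  simp [eV]

lemma add_eV_apply_of_ne (t : Vtx d) {i j : Fin d} (h : j ≠ i) : (t + eV i) j = t j := by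
  simp [eV, h]

lemma add_add_self (t v : Vtx d) : t + v + v = t := by
  rw [add_assoc, ZModModule.add_self, add_zero]

lemma mem_image_add_right_iff {A : Finset (Vtx d)} {v t : Vtx d} :
    t ∈ A.image (· + v) ↔ t + v ∈ A := by
  rw [mem_image]
  constructor
  · rintro ⟨a, ha, rfl⟩
    rwa [add_add_self]
  · exact fun h => ⟨t + v, h, add_add_self t v⟩

/-- Each edge `{t, t + eᵢ}` of `S` is counted twice on the left, once from either endpoint. -/
lemma card_filter_add_eV_mem (S : Finset (Vtx d)) (i : Fin d) :
    #{t ∈ S | t + eV i ∈ S} = 2 * edgeCount S i := by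
  rw [two_mul, ← card_filter_add_card_filter_not (p := fun t => t i = 0), filter_filter,
    filter_filter]
  congr 1
  · exact congrArg card (filter_congr fun _ _ => and_comm)
  · refine card_nbij' (· + eV i) (· + eV i) ?_ ?_ (fun t _ => ?_) (fun t _ => ?_)
    · intro t ht
      simp only [coe_filter, Set.mem_ofPred_eq] at ht ⊢
      obtain ⟨ht, hS, hi⟩ := ht
      rw [add_eV_apply_self, CharTwo.add_eq_zero, add_add_self]
      exact ⟨hS, Fin.eq_one_of_ne_zero _ hi, ht⟩
    · intro t ht
      simp only [coe_filter, Set.mem_ofPred_eq] at ht ⊢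
      obtain ⟨ht, hi, hS⟩ := ht
      rw [add_eV_apply_self, CharTwo.add_eq_zero, add_add_self, hi]
      exact ⟨hS, ht, zero_ne_one⟩
    all_goals exact add_add_self t (eV i)

lemma edgeCount_image_add_right (S : Finset (Vtx d)) (v : Vtx d) (i : Fin d) :
    edgeCount (S.image (· + v)) i = edgeCount S i := by
  have hcard : #{t ∈ S.image (· + v) | t + eV i ∈ S.image (· + v)} = #{t ∈ S | t + eV i ∈ S} := by
    rw [filter_image, card_image_of_injective _ (add_left_injective v)]
    refine congrArg card (filter_congr fun t _ => ?_)
    rw [mem_image_add_right_iff, add_right_comm, add_add_self]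
  rw [card_filter_add_eV_mem, card_filter_add_eV_mem] at hcard
  omega

end EdgeCount

section Layers

variable {d : ℕ} {A B : Finset (Vtx d)} {l : Fin d}

lemma disjoint_of_layers (hA : ∀ t ∈ A, t l = 0) (hB : ∀ t ∈ B, t l = 1) : Disjoint A B :=
  disjoint_left.2 fun t htA htB => zero_ne_one ((hA t htA).symm.trans (hB t htB))

lemma edgeCount_union_of_layers_of_ne (hA : ∀ t ∈ A, t l = 0) (hB : ∀ t ∈ B, t l = 1)
    {i : Fin d} (hi : l ≠ i) :
    edgeCount (A ∪ B) i = edgeCount A i + edgeCount B i := by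
  unfold edgeCount
  rw [filter_union, card_union_of_disjoint
    (disjoint_filter_filter (disjoint_of_layers hA hB))]
  congr 1
  · refine congrArg card (filter_congr fun t ht => and_congr_right fun _ => ?_)
    refine ⟨fun h => (mem_union.1 h).resolve_right fun hB' => ?_, mem_union_left B⟩
    have := hB _ hB'
    rw [add_eV_apply_of_ne t hi, hA t ht] at this
    exact zero_ne_one this
  · refine congrArg card (filter_congr fun t ht => and_congr_right fun _ => ?_)
    refine ⟨fun h => (mem_union.1 h).resolve_left fun hA' => ?_, mem_union_right A⟩
    have := hA _ hA'
    rw [add_eV_apply_of_ne t hi, hB t ht] at this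
    exact one_ne_zero this

lemma edgeCount_union_of_layers (hA : ∀ t ∈ A, t l = 0) (hB : ∀ t ∈ B, t l = 1) :
    edgeCount (A ∪ B) l = #{t ∈ A | t + eV l ∈ B} := by
  unfold edgeCount
  rw [filter_union, union_eq_left.2 (fun t ht => ?_)]
  · refine congrArg card (filter_congr fun t ht => ?_)
    have hA' : t + eV l ∉ A := fun h => by
      have := hA _ h
      rw [add_eV_apply_self, hA t ht, zero_add] at this
      exact one_ne_zero this
    simp [hA t ht, hA']
  · simp only [mem_filter] at ht
    exact absurd ((hB t ht.1).symm.trans ht.2.1) one_ne_zero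

end Layers

section Embedding

variable {d : ℕ}

lemma emb_injective : Function.Injective (emb (d := d)) := fun s t h =>
  funext fun i => by simpa [emb] using congrFun h i.castSucc

@[simp]
lemma emb_apply_castSucc (t : Vtx d) (i : Fin d) : emb t i.castSucc = t i := by
  simp [emb]

@[simp]
lemma emb_apply_last (t : Vtx d) : emb t (Fin.last d) = 0 := by
  simp [emb]

lemma emb_add (s t : Vtx d) : emb (s + t) = emb s + emb t := by
  funext x
  refine Fin.lastCases ?_ (fun i => ?_) x <;> simp

lemma emb_eV (j : Fin d) : emb (eV j) = eV j.castSucc := by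
  funext x
  refine Fin.lastCases ?_ (fun i => ?_) x
  · simp [eV, (Fin.castSucc_lt_last j).ne']
  · simp [eV, Pi.single_apply]

lemma edgeCount_image_emb (S : Finset (Vtx d)) (j : Fin d) :
    edgeCount (S.image emb) j.castSucc = edgeCount S j := by
  unfold edgeCount
  rw [filter_image, card_image_of_injective _ emb_injective]
  refine congrArg card (filter_congr fun t _ => ?_)
  rw [emb_apply_castSucc, ← emb_eV, ← emb_add, emb_injective.mem_finset_image]

end Embedding

/-- The polynomial recursion `G_m^d = (1 + X_j X_d) G_{m/2}^{d-1}`, for any `j < d`. -/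
theorem Equitable.image_emb_union_image_add {d k : ℕ} {S : Finset (Vtx d)}
    (h : Equitable S k) (j : Fin d) :
    Equitable (S.image emb ∪ (S.image emb).image (· + (eV j.castSucc + eV (Fin.last d))))
      (2 * k) := by
  set u : Vtx (d + 1) := eV j.castSucc + eV (Fin.last d) with hu
  have hA : ∀ t ∈ S.image emb, t (Fin.last d) = 0 := by simp
  have hB : ∀ t ∈ (S.image emb).image (· + u), t (Fin.last d) = 1 := fun t ht => by
    have := hA _ (mem_image_add_right_iff.1 ht)
    rwa [hu, ← add_assoc, add_eV_apply_self,
      add_eV_apply_of_ne _ (Fin.castSucc_lt_last j).ne', CharTwo.add_eq_zero] at this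
  intro i
  refine Fin.lastCases ?_ (fun i => ?_) i
  · rw [edgeCount_union_of_layers hA hB, filter_image,
      card_image_of_injective _ emb_injective, ← h j, ← card_filter_add_eV_mem]
    refine congrArg card (filter_congr fun s _ => ?_)
    rw [mem_image_add_right_iff, add_assoc,
      show eV (Fin.last d) + u = eV j.castSucc by
        rw [hu, add_left_comm, ZModModule.add_self, add_zero],
      ← emb_eV, ← emb_add, emb_injective.mem_finset_image]
  · rw [edgeCount_union_of_layers_of_ne hA hB (Fin.castSucc_lt_last i).ne',
      edgeCount_image_add_right, edgeCount_image_emb, h i, two_mul]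

theorem stmt9 (d : ℕ) (hd : 1 ≤ d) (k : ℕ) (S : Finset (Vtx d))
    (h : Equitable S k) :
    Equitable
      ((S.image fun t => emb t) ∪
        (S.image fun t => emb t + eV 0 + eV (Fin.last d)))
      (2 * k) := by
  have hzero : (Fin.castSucc ⟨0, hd⟩ : Fin (d + 1)) = 0 := by ext; simp
  have hshift : (S.image fun t => emb t + eV 0 + eV (Fin.last d)) =
      (S.image emb).image (· + (eV (Fin.castSucc ⟨0, hd⟩) + eV (Fin.last d))) := by
    rw [image_image, hzero]
    simp only [Function.comp_def, add_assoc]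
  rw [hshift]
  exact h.image_emb_union_image_add ⟨0, hd⟩
end

section
/- The set H_3^d ⊆ Q_d consisting of 0, e_1 ⊕ e_d, all e_k (1 ≤ k ≤ d), and all e_j ⊕ e_{j+1} (1 ≤ j ≤ d−1) is (d,3)-edge equitable for d ≥ 3, and has cardinality 2d + 1. -/
/-!
Identify a vertex of `Q_d` with its support, so that for `t_i = 0` the vertex `t ⊕ e_i` has
support `supp t ∪ {i}`. Then `H_3^d` is the set of supports that are cliques of the `d`-cycle with
at most two elements. For any graph `G`, the edges `{t, t ⊕ e_i}` (`t_i = 0`) inside this set are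
the cliques `s ∌ i` for which `s ∪ {i}` is still a clique of size `≤ 2`, i.e. `s = ∅` or `s = {a}`
with `a ~ i`: there are `deg i + 1` of them, and the set has `1 + d + |E(G)|` elements. The
`d`-cycle is `2`-regular with `d` edges.
-/

open Finset

namespace SimpleGraph

variable {α : Type*} [DecidableEq α] {G : SimpleGraph α} {s : Finset α}

theorem isNClique_two : G.IsNClique 2 s ↔ ∃ a b, G.Adj a b ∧ s = {a, b} := by
  constructor
  · intro h
    obtain ⟨a, b, hab, rfl⟩ := card_eq_two.1 h.card_eq
    exact ⟨a, b, h.isClique (by simp) (by simp) hab, rfl⟩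
  · rintro ⟨a, b, hab, rfl⟩
    exact ⟨by simpa [coe_pair] using isClique_pair.2 fun _ => hab, card_pair hab.ne⟩

variable [Fintype α] (G) [DecidableRel G.Adj]

theorem mem_cliqueFinset_union_le_two :
    s ∈ G.cliqueFinset 0 ∪ G.cliqueFinset 1 ∪ G.cliqueFinset 2 ↔ G.IsClique s ∧ #s ≤ 2 := by
  simp only [mem_union, mem_cliqueFinset_iff, isNClique_iff]
  constructor
  · rintro ((⟨h, hs⟩ | ⟨h, hs⟩) | ⟨h, hs⟩) <;> exact ⟨h, by omega⟩
  · rintro ⟨h, hs⟩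
    have : #s = 0 ∨ #s = 1 ∨ #s = 2 := by omega
    tauto

theorem disjoint_cliqueFinset {m n : ℕ} (h : m ≠ n) :
    Disjoint (G.cliqueFinset m) (G.cliqueFinset n) :=
  Finset.disjoint_left.2 fun _ hm hn =>
    h ((mem_cliqueFinset_iff.1 hm).card_eq.symm.trans (mem_cliqueFinset_iff.1 hn).card_eq)

theorem card_cliqueFinset_zero : #(G.cliqueFinset 0) = 1 := by
  rw [card_eq_one]; exact ⟨∅, by ext; simp⟩

theorem card_cliqueFinset_one : #(G.cliqueFinset 1) = Fintype.card α := by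
  rw [← card_univ, ← card_image_of_injective univ singleton_injective]
  congr 1; ext; simp [eq_comm]

theorem card_cliqueFinset_two : #(G.cliqueFinset 2) = #G.edgeFinset := by
  refine (card_bij (fun e _ => e.toFinset) ?_ ?_ ?_).symm
  · intro e he
    induction e using Sym2.ind with
    | _ a b =>
      exact mem_cliqueFinset_iff.2 (isNClique_two.2 ⟨a, b, by simpa using he, Sym2.toFinset_mk_eq⟩)
  · intro e _ e' _ h
    exact Sym2.ext fun x => by rw [← Sym2.mem_toFinset, h, Sym2.mem_toFinset]
  · intro s hs
    obtain ⟨a, b, hab, rfl⟩ := isNClique_two.1 (mem_cliqueFinset_iff.1 hs)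
    exact ⟨s(a, b), by simpa using hab, Sym2.toFinset_mk_eq⟩

end SimpleGraph

open SimpleGraph

variable {d : ℕ}

def vtxOfFinset (s : Finset (Fin d)) : Vtx d := ∑ k ∈ s, eV k

theorem vtxOfFinset_apply (s : Finset (Fin d)) (j : Fin d) :
    vtxOfFinset s j = if j ∈ s then 1 else 0 := by
  simp [vtxOfFinset, eV, Finset.sum_apply, Pi.single_apply]

theorem vtxOfFinset_injective : Function.Injective (vtxOfFinset (d := d)) := by
  intro s t h
  ext j
  have := congrFun h j
  simp only [vtxOfFinset_apply] at this
  split_ifs at this <;> simp_all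

theorem vtxOfFinset_empty : vtxOfFinset (∅ : Finset (Fin d)) = 0 := sum_empty

theorem vtxOfFinset_singleton (k : Fin d) : vtxOfFinset {k} = eV k := sum_singleton _ _

theorem vtxOfFinset_pair {a b : Fin d} (h : a ≠ b) : vtxOfFinset {a, b} = eV a + eV b :=
  sum_pair h

theorem vtxOfFinset_insert {s : Finset (Fin d)} {i : Fin d} (h : i ∉ s) :
    vtxOfFinset (insert i s) = vtxOfFinset s + eV i := by
  rw [vtxOfFinset, sum_insert h, add_comm]; rfl

theorem edgeCount_image_vtxOfFinset (F : Finset (Finset (Fin d))) (i : Fin d) :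
    edgeCount (F.image vtxOfFinset) i = #{s ∈ F | i ∉ s ∧ insert i s ∈ F} := by
  rw [edgeCount, filter_image, card_image_of_injective _ vtxOfFinset_injective]
  congr 1
  refine filter_congr fun s _ => ?_
  rw [vtxOfFinset_apply]
  by_cases h : i ∈ s
  · simp [h]
  · simp only [h, if_false, not_false_eq_true, true_and, ← vtxOfFinset_insert h,
      vtxOfFinset_injective.mem_finset_image]

/-- `{0} ∪ {e_k} ∪ {e_a ⊕ e_b | ab ∈ E(G)}`. -/
def graphDesign (G : SimpleGraph (Fin d)) [DecidableRel G.Adj] : Finset (Vtx d) :=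
  (G.cliqueFinset 0 ∪ G.cliqueFinset 1 ∪ G.cliqueFinset 2).image vtxOfFinset

section graphDesign

variable (G : SimpleGraph (Fin d)) [DecidableRel G.Adj]

theorem edgeCount_graphDesign (i : Fin d) : edgeCount (graphDesign G) i = G.degree i + 1 := by
  have lowerEnds : {s ∈ G.cliqueFinset 0 ∪ G.cliqueFinset 1 ∪ G.cliqueFinset 2 |
      i ∉ s ∧ insert i s ∈ G.cliqueFinset 0 ∪ G.cliqueFinset 1 ∪ G.cliqueFinset 2} =
      insert ∅ ((G.neighborFinset i).image singleton) := by
    ext s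
    simp only [mem_filter, mem_cliqueFinset_union_le_two, mem_insert, mem_image,
      mem_neighborFinset]
    constructor
    · rintro ⟨-, his, hclique, hcard⟩
      rw [card_insert_of_notMem his] at hcard
      rcases Nat.le_one_iff_eq_zero_or_eq_one.1 (by omega : #s ≤ 1) with h | h
      · exact Or.inl (card_eq_zero.1 h)
      · obtain ⟨a, rfl⟩ := card_eq_one.1 h
        refine Or.inr ⟨a, ?_, rfl⟩
        rw [coe_insert, coe_singleton, isClique_insert] at hclique
        exact hclique.2 a rfl (by simpa using his)
    · rintro (rfl | ⟨a, hia, rfl⟩)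
      · simp
      · simp [hia.ne, hia]
  rw [graphDesign, edgeCount_image_vtxOfFinset, lowerEnds, card_insert_of_notMem (by simp),
    card_image_of_injective _ singleton_injective, card_neighborFinset_eq_degree]

theorem card_graphDesign : #(graphDesign G) = 1 + d + #G.edgeFinset := by
  rw [graphDesign, card_image_of_injective _ vtxOfFinset_injective,
    card_union_of_disjoint (disjoint_union_left.2 ⟨G.disjoint_cliqueFinset (by decide),
      G.disjoint_cliqueFinset (by decide)⟩),
    card_union_of_disjoint (G.disjoint_cliqueFinset (by decide)), card_cliqueFinset_zero,
    card_cliqueFinset_one, card_cliqueFinset_two, Fintype.card_fin]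

end graphDesign

theorem cycleGraph_adj_iff_val (hd : 2 ≤ d) {u v : Fin d} :
    (cycleGraph d).Adj u v ↔ u.val + 1 = v.val ∨ v.val + 1 = u.val ∨
      (u.val = 0 ∧ v.val = d - 1) ∨ (v.val = 0 ∧ u.val = d - 1) := by
  rw [cycleGraph_adj']
  rcases lt_trichotomy u v with h | rfl | h
  · rw [Fin.coe_sub_iff_lt.2 h, Fin.coe_sub_iff_le.2 h.le]
    have := Fin.lt_def.1 h
    omega
  · rw [Fin.coe_sub_iff_le.2 le_rfl]
    omega
  · rw [Fin.coe_sub_iff_lt.2 h, Fin.coe_sub_iff_le.2 h.le]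
    have := Fin.lt_def.1 h
    omega

theorem isNClique_two_cycleGraph (hd : 2 ≤ d) {s : Finset (Fin d)} :
    (cycleGraph d).IsNClique 2 s ↔ s = {⟨0, by omega⟩, ⟨d - 1, by omega⟩} ∨
      ∃ j : Fin (d - 1), {⟨j, by omega⟩, ⟨j + 1, by omega⟩} = s := by
  rw [isNClique_two]
  constructor
  · rintro ⟨⟨a, ha⟩, ⟨b, hb⟩, hab, rfl⟩
    rw [cycleGraph_adj_iff_val (by omega)] at hab
    simp only at hab
    rcases hab with rfl | rfl | ⟨rfl, rfl⟩ | ⟨rfl, rfl⟩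
    · exact Or.inr ⟨⟨a, by omega⟩, rfl⟩
    · exact Or.inr ⟨⟨b, by omega⟩, pair_comm _ _⟩
    · exact Or.inl rfl
    · exact Or.inl (pair_comm _ _)
  · rintro (rfl | ⟨j, rfl⟩)
    · exact ⟨_, _, (cycleGraph_adj_iff_val (by omega)).2 (by simp), rfl⟩
    · exact ⟨_, _, (cycleGraph_adj_iff_val (by omega)).2 (by simp), rfl⟩

theorem cycleGraph_degree (hd : 3 ≤ d) (v : Fin d) : (cycleGraph d).degree v = 2 := by
  obtain ⟨n, rfl⟩ := Nat.exists_eq_add_of_le' hd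
  exact cycleGraph_degree_three_le

theorem card_edgeFinset_cycleGraph (hd : 3 ≤ d) : #(cycleGraph d).edgeFinset = d := by
  have := sum_degrees_eq_twice_card_edges (cycleGraph d)
  simp only [cycleGraph_degree hd, sum_const, card_univ, Fintype.card_fin, smul_eq_mul] at this
  omega

def H3 (d : ℕ) (hd : 0 < d) : Finset (Vtx d) :=
  insert (0 : Vtx d)
    (insert (eV (⟨0, by omega⟩ : Fin d) + eV (⟨d - 1, by omega⟩ : Fin d))
      ((Finset.univ.image fun i : Fin d => eV i) ∪
        (Finset.univ.image fun j : Fin (d - 1) =>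
          eV (⟨j.1, by omega⟩ : Fin d) + eV (⟨j.1 + 1, by omega⟩ : Fin d))))

theorem H3_eq_graphDesign (hd : 2 ≤ d) : H3 d (by omega) = graphDesign (cycleGraph d) := by
  have supports : (cycleGraph d).cliqueFinset 0 ∪ (cycleGraph d).cliqueFinset 1 ∪
      (cycleGraph d).cliqueFinset 2 = insert ∅ (insert {⟨0, by omega⟩, ⟨d - 1, by omega⟩}
        (univ.image singleton ∪
          univ.image fun j : Fin (d - 1) => {⟨j, by omega⟩, ⟨j + 1, by omega⟩})) := by
    ext s
    simp only [mem_union, mem_insert, mem_image, mem_univ, true_and, mem_cliqueFinset_iff,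
      isNClique_zero, isNClique_one, isNClique_two_cycleGraph hd, eq_comm (a := s)]
    tauto
  rw [graphDesign, supports, H3]
  simp only [image_insert, image_union, image_image, Function.comp_def, vtxOfFinset_empty,
    vtxOfFinset_singleton]
  rw [vtxOfFinset_pair (Fin.ne_of_val_ne (by simp only; omega))]
  congr
  ext j
  rw [vtxOfFinset_pair (by simp)]

theorem stmt14 (d : ℕ) (hd : 3 ≤ d) :
    Equitable
      (insert (0 : Vtx d)
        (insert (eV (⟨0, by omega⟩ : Fin d) + eV (⟨d - 1, by omega⟩ : Fin d))
          ((Finset.univ.image fun i : Fin d => eV i) ∪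
            (Finset.univ.image fun j : Fin (d - 1) =>
              eV (⟨j.1, by omega⟩ : Fin d) + eV (⟨j.1 + 1, by omega⟩ : Fin d)))))
      3 ∧
    (insert (0 : Vtx d)
        (insert (eV (⟨0, by omega⟩ : Fin d) + eV (⟨d - 1, by omega⟩ : Fin d))
          ((Finset.univ.image fun i : Fin d => eV i) ∪
            (Finset.univ.image fun j : Fin (d - 1) =>
              eV (⟨j.1, by omega⟩ : Fin d) + eV (⟨j.1 + 1, by omega⟩ : Fin d))))).card
      = 2 * d + 1 := by
  change Equitable (H3 d (by omega)) 3 ∧ #(H3 d (by omega)) = 2 * d + 1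
  rw [H3_eq_graphDesign (by omega)]
  refine ⟨fun i => ?_, ?_⟩
  · rw [edgeCount_graphDesign, cycleGraph_degree hd]
  · rw [card_graphDesign, card_edgeFinset_cycleGraph hd]
    ring
end

section
/- If S ⊆ Q_{q} is (q,m)-edge equitable and contains the origin 0, and d = c·q, then the set M ⊆ Q_d obtained as the union over j = 0,...,c−1 of the shifted copies of S placed on coordinates jq+1,...,(j+1)q (all other coordinates 0) is (d,m)-edge equitable, and |M| = c(|S| − 1) + 1. -/
/-- The copy of `t : Q_q` placed on the `j`-th block of `q` coordinates of
`Q_{c·q}`, all other coordinates set to `0`. -/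
def blockEmb (c q : ℕ) (j : ℕ) (t : Vtx q) : Vtx (c * q) := fun i =>
  if h : j * q ≤ i.1 ∧ i.1 < j * q + q then t ⟨i.1 - j * q, by omega⟩ else 0

section Aux
variable {c q : ℕ}

lemma mul_succ_le' {a b : ℕ} (h : a < b) : a * q + q ≤ b * q := by
  calc a * q + q = (a+1) * q := by ring
    _ ≤ b * q := Nat.mul_le_mul h (le_refl q)

lemma block_lt {j : ℕ} (hj : j < c) (k : Fin q) : j * q + k.1 < c * q := by
  have h1 := mul_succ_le' (q := q) hj
  have := k.2; omega

lemma blockEmb_apply_mem (j : ℕ) (t : Vtx q) (i : Fin (c*q)) (h1 : j*q ≤ i.1)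
    (h2 : i.1 < j*q + q) : blockEmb c q j t i = t ⟨i.1 - j*q, by omega⟩ :=
  dif_pos ⟨h1, h2⟩

lemma blockEmb_apply_notmem (j : ℕ) (t : Vtx q) (i : Fin (c*q))
    (h : ¬ (j*q ≤ i.1 ∧ i.1 < j*q + q)) : blockEmb c q j t i = 0 :=
  dif_neg h

lemma blockEmb_apply (j : ℕ) (t : Vtx q) (k : Fin q) (h : j * q + k.1 < c * q) :
    blockEmb c q j t ⟨j * q + k.1, h⟩ = t k := by
  rw [blockEmb_apply_mem j t _ (Nat.le_add_right _ _)
    (show j * q + k.1 < j * q + q by have := k.2; omega)]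
  congr 1
  exact Fin.ext (by simp)

lemma blockEmb_zero (j : ℕ) : blockEmb c q j (0 : Vtx q) = 0 := by
  funext i; unfold blockEmb; split <;> rfl

lemma blockEmb_add (j : ℕ) (t s : Vtx q) :
    blockEmb c q j (t + s) = blockEmb c q j t + blockEmb c q j s := by
  funext i; simp only [Pi.add_apply]; unfold blockEmb; split <;> simp

lemma blockEmb_eq_zero {j : ℕ} (hj : j < c) {t : Vtx q}
    (h : blockEmb c q j t = 0) : t = 0 := by
  funext k
  have := congrFun h ⟨j*q + k.1, block_lt hj k⟩
  rwa [blockEmb_apply j t k] at this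

lemma blockEmb_injective {j : ℕ} (hj : j < c) :
    Function.Injective (blockEmb c q j) := by
  intro t s h
  funext k
  have := congrFun h ⟨j*q + k.1, block_lt hj k⟩
  rwa [blockEmb_apply j t k, blockEmb_apply j s k] at this

lemma blockEmb_cross {j j' : ℕ} (hj : j < c) (hj' : j' < c) (hne : j ≠ j')
    {t t' : Vtx q} (h : blockEmb c q j t = blockEmb c q j' t') : t = 0 := by
  funext k
  have h1 := congrFun h ⟨j*q + k.1, block_lt hj k⟩
  rw [blockEmb_apply j t k] at h1
  rw [blockEmb_apply_notmem j' t' _ ?_] at h1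
  · simpa using h1
  · show ¬ (j' * q ≤ j * q + k.1 ∧ j * q + k.1 < j' * q + q)
    rcases Nat.lt_or_ge j j' with hlt | hge
    · have := mul_succ_le' (q := q) hlt; have := k.2; omega
    · have hlt' : j' < j := lt_of_le_of_ne hge (Ne.symm hne)
      have := mul_succ_le' (q := q) hlt'; omega

lemma add_self_vtx {d : ℕ} (x : Vtx d) : x + x = 0 := by
  funext i
  have h2 : ∀ a : ZMod 2, a + a = 0 := by decide
  simpa using h2 (x i)

lemma eV_eq_blockEmb {j0 k : ℕ} (hk : k < q) (i : Fin (c*q))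
    (hik : i.1 = j0 * q + k) :
    eV i = blockEmb c q j0 (eV ⟨k, hk⟩) := by
  funext i'
  by_cases h : j0*q ≤ i'.1 ∧ i'.1 < j0*q + q
  · rw [blockEmb_apply_mem _ _ _ h.1 h.2]
    simp only [eV, Pi.single_apply]
    split_ifs with h1 h2 h2
    · rfl
    · exfalso; apply h2; subst h1; simp only [Fin.mk.injEq]; omega
    · exfalso
      apply h1
      rw [Fin.mk.injEq] at h2
      exact Fin.ext (by omega)
    · rfl
  · rw [blockEmb_apply_notmem _ _ _ h]
    have hne : i' ≠ i := by
      intro hh; subst hh; exact h ⟨by omega, by omega⟩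
    simp [eV, Pi.single_apply, hne]

lemma mem_bigM {S : Finset (Vtx q)} (h0 : (0 : Vtx q) ∈ S) {j : ℕ} (hj : j < c)
    (s : Vtx q) :
    blockEmb c q j s ∈ (Finset.range c).biUnion (fun j => S.image (blockEmb c q j))
      ↔ s ∈ S := by
  simp only [Finset.mem_biUnion, Finset.mem_range, Finset.mem_image]
  constructor
  · rintro ⟨j', hj', t', ht', he⟩
    by_cases hjj : j' = j
    · subst hjj
      rwa [blockEmb_injective hj' he] at ht'
    · have hs0 : s = 0 := blockEmb_cross hj hj' (fun hh => hjj hh.symm) he.symm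
      rw [hs0]; exact h0
  · exact fun hs => ⟨j, hj, s, hs, rfl⟩

end Aux

theorem stmt15 (c q m : ℕ) (hc : 1 ≤ c) (hq : 1 ≤ q) (S : Finset (Vtx q))
    (h0 : (0 : Vtx q) ∈ S) (hS : Equitable S m) :
    Equitable ((Finset.range c).biUnion fun j => S.image (blockEmb c q j)) m ∧
    ((Finset.range c).biUnion fun j => S.image (blockEmb c q j)).card
      = c * (S.card - 1) + 1 := by
  set M := (Finset.range c).biUnion fun j => S.image (blockEmb c q j) with hMdef
  constructor
  · -- Equitable
    intro i
    obtain ⟨j0, k, hj0, hk, hik⟩ : ∃ j0 k, j0 < c ∧ k < q ∧ i.1 = j0 * q + k := by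
      refine ⟨i.1 / q, i.1 % q, ?_, Nat.mod_lt _ hq, (Nat.div_add_mod' i.1 q).symm⟩
      exact Nat.div_lt_of_lt_mul (lt_of_lt_of_le i.2 (Nat.mul_comm c q).le)
    have hib1 : j0 * q ≤ i.1 := by omega
    have hib2 : i.1 < j0 * q + q := by omega
    have heV : eV i = blockEmb c q j0 (eV ⟨k, hk⟩) := eV_eq_blockEmb hk i hik
    have hidx : (⟨i.1 - j0 * q, by omega⟩ : Fin q) = ⟨k, hk⟩ := by
      simp only [Fin.mk.injEq]; omega
    have hfilter : M.filter (fun v => v i = 0 ∧ v + eV i ∈ M)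
        = (S.filter fun t => t ⟨k, hk⟩ = 0 ∧ t + eV ⟨k, hk⟩ ∈ S).image
            (blockEmb c q j0) := by
      ext v
      simp only [Finset.mem_filter, Finset.mem_image]
      constructor
      · rintro ⟨hvM, hvi, hvM2⟩
        rw [hMdef] at hvM
        simp only [Finset.mem_biUnion, Finset.mem_range, Finset.mem_image] at hvM
        obtain ⟨j, hj, t, ht, he⟩ := hvM
        by_cases hjj : j = j0
        · subst hjj
          refine ⟨t, ⟨ht, ?_, ?_⟩, he⟩
          · have h1 := congrFun he i
            rw [blockEmb_apply_mem _ _ _ hib1 hib2, hidx] at h1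
            exact h1.trans hvi
          · have h2 : v + eV i = blockEmb c q j (t + eV ⟨k, hk⟩) := by
              rw [blockEmb_add, he, heV]
            rw [h2] at hvM2
            exact (mem_bigM h0 hj _).1 hvM2
        · -- cross-block case: v must be 0
          rw [hMdef] at hvM2
          simp only [Finset.mem_biUnion, Finset.mem_range, Finset.mem_image] at hvM2
          obtain ⟨j', hj', t', ht', he'⟩ := hvM2
          have hval : blockEmb c q j' t' i = 1 := by
            rw [he', Pi.add_apply, hvi, heV, zero_add,
              blockEmb_apply_mem _ _ _ hib1 hib2, hidx]
            simp [eV]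
          have hj'j0 : j' = j0 := by
            by_contra hne
            rw [blockEmb_apply_notmem j' t' i ?_] at hval
            · exact one_ne_zero hval.symm
            · rcases Nat.lt_or_ge j' j0 with hlt | hge
              · have := mul_succ_le' (q := q) hlt; omega
              · have hlt' : j0 < j' := lt_of_le_of_ne hge (Ne.symm hne)
                have := mul_succ_le' (q := q) hlt'; omega
          subst hj'j0
          have hveq : v = blockEmb c q j' (t' + eV ⟨k, hk⟩) := by
            rw [blockEmb_add, he', ← heV, add_assoc, add_self_vtx, add_zero]
          have ht0 : t' + eV ⟨k, hk⟩ = 0 :=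
            blockEmb_cross hj' hj (fun hh => hjj hh.symm) (he.trans hveq).symm
          have ht'eq : t' = eV ⟨k, hk⟩ := by
            have h3 := congrArg (fun x => x + eV ⟨k, hk⟩) ht0
            simpa [add_assoc, add_self_vtx] using h3
          refine ⟨0, ⟨h0, rfl, ?_⟩, ?_⟩
          · show (0 : Vtx q) + eV ⟨k, hk⟩ ∈ S
            rw [zero_add, ← ht'eq]; exact ht'
          · rw [blockEmb_zero, hveq, ht0, blockEmb_zero]
      · rintro ⟨t, ⟨htS, htk, htk2⟩, he⟩
        refine ⟨?_, ?_, ?_⟩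
        · rw [← he]; exact (mem_bigM h0 hj0 t).2 htS
        · rw [← he, blockEmb_apply_mem _ _ _ hib1 hib2, hidx]
          exact htk
        · rw [← he, heV, ← blockEmb_add]
          exact (mem_bigM h0 hj0 _).2 htk2
    rw [edgeCount, hfilter,
      Finset.card_image_of_injective _ (blockEmb_injective hj0)]
    exact hS ⟨k, hk⟩
  · -- cardinality
    have hM : M = insert 0 ((Finset.range c).biUnion
        fun j => (S.erase 0).image (blockEmb c q j)) := by
      ext v
      simp only [Finset.mem_insert, hMdef, Finset.mem_biUnion, Finset.mem_range,
        Finset.mem_image, Finset.mem_erase]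
      constructor
      · rintro ⟨j, hj, t, ht, he⟩
        by_cases ht0 : t = 0
        · left; rw [← he, ht0, blockEmb_zero]
        · right; exact ⟨j, hj, t, ⟨ht0, ht⟩, he⟩
      · rintro (h | ⟨j, hj, t, ⟨-, ht⟩, he⟩)
        · exact ⟨0, hc, 0, h0, by rw [blockEmb_zero, h]⟩
        · exact ⟨j, hj, t, ht, he⟩
    have hnot : (0 : Vtx (c*q)) ∉ (Finset.range c).biUnion
        (fun j => (S.erase 0).image (blockEmb c q j)) := by
      intro hcontra
      simp only [Finset.mem_biUnion, Finset.mem_range, Finset.mem_image,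
        Finset.mem_erase] at hcontra
      obtain ⟨j, hj, t, ⟨ht0, -⟩, he⟩ := hcontra
      exact ht0 (blockEmb_eq_zero hj he)
    have hdisj : ∀ j ∈ Finset.range c, ∀ j' ∈ Finset.range c, j ≠ j' →
        Disjoint ((S.erase 0).image (blockEmb c q j))
          ((S.erase 0).image (blockEmb c q j')) := by
      intro j hj j' hj' hne
      simp only [Finset.mem_range] at hj hj'
      rw [Finset.disjoint_left]
      rintro v hv hv'
      simp only [Finset.mem_image, Finset.mem_erase] at hv hv'
      obtain ⟨t, ⟨ht0, -⟩, he⟩ := hv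
      obtain ⟨t', ⟨ht0', -⟩, he'⟩ := hv'
      exact ht0 (blockEmb_cross hj hj' hne (he.trans he'.symm))
    have hcardeach : ∀ j ∈ Finset.range c,
        ((S.erase 0).image (blockEmb c q j)).card = S.card - 1 := by
      intro j hj
      rw [Finset.card_image_of_injective _
          (blockEmb_injective (Finset.mem_range.1 hj)),
        Finset.card_erase_of_mem h0]
    rw [hM, Finset.card_insert_of_notMem hnot, Finset.card_biUnion hdisj,
      Finset.sum_congr rfl hcardeach, Finset.sum_const, Finset.card_range,
      smul_eq_mul]
end

section
/- For m with 2^{d-2} ≤ m ≤ 2^{d-1}, removing any set T of 2^{d-1} − m pairwise non-adjacent vertices from Q_d yields a (d,m)-edge equitable set: each removed vertex destroys exactly one edge in each direction, and non-adjacency ensures no edge is counted twice. -/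
theorem stmt18 (d m : ℕ) (hm1 : 2 ^ (d - 2) ≤ m) (hm2 : m ≤ 2 ^ (d - 1))
    (T : Finset (Vtx d)) (hTcard : T.card = 2 ^ (d - 1) - m)
    (hTindep : ∀ t ∈ T, ∀ t' ∈ T, ∀ i : Fin d, t' ≠ t + eV i) :
    Equitable ((Finset.univ : Finset (Vtx d)) \ T) m := by
  intro i
  classical
  have hei : eV i i = (1 : ZMod 2) := Pi.single_eq_same i 1
  have hcancel : ∀ t : Vtx d, t + eV i + eV i = t := by
    intro t; funext j
    simp only [Pi.add_apply]
    have h2 : ∀ x : ZMod 2, x + x = 0 := by decide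
    rw [add_assoc, h2, add_zero]
  have haddi : ∀ t : Vtx d, (t + eV i) i = t i + 1 := by
    intro t; simp [Pi.add_apply, hei]
  have hzmod : ∀ x : ZMod 2, x = 0 ∨ x = 1 := by decide
  set f : Vtx d → Vtx d := fun t => if t i = 0 then t else t + eV i with hf
  set B := Finset.univ.filter (fun t : Vtx d => t i = 0) with hB
  set D := T.image f with hD
  clear_value f B D
  -- D membership characterization for t with t i = 0
  have hDm : ∀ t : Vtx d, t i = 0 → (t ∈ D ↔ t ∈ T ∨ t + eV i ∈ T) := by
    intro t ht
    constructor
    · rintro hmem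
      rw [hD, Finset.mem_image] at hmem
      obtain ⟨s, hs, hfs⟩ := hmem
      by_cases h0 : s i = 0
      · left
        have hst : s = t := by rw [← hfs, hf]; simp [h0]
        rwa [hst] at hs
      · right
        have hfs' : s + eV i = t := by rw [← hfs, hf]; simp [h0]
        have hts : t + eV i = s := by rw [← hfs']; exact hcancel s
        rwa [hts]
    · rintro (h | h)
      · rw [hD, Finset.mem_image]
        exact ⟨t, h, by rw [hf]; simp [ht]⟩
      · rw [hD, Finset.mem_image]
        refine ⟨t + eV i, h, ?_⟩
        have h1 : (t + eV i) i ≠ 0 := by rw [haddi, ht]; decide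
        rw [hf]
        simp only [if_neg h1]
        exact hcancel t
  -- D ⊆ B
  have hDB : D ⊆ B := by
    intro t ht
    rw [hD, Finset.mem_image] at ht
    obtain ⟨s, hs, rfl⟩ := ht
    rw [hB, Finset.mem_filter]
    refine ⟨Finset.mem_univ _, ?_⟩
    rw [hf]
    by_cases h0 : s i = 0
    · simp [h0]
    · have h1 : s i = 1 := (hzmod (s i)).resolve_left h0
      simp only [if_neg h0]
      rw [haddi, h1]
      decide
  -- card D = card T
  have hDcard : D.card = T.card := by
    rw [hD]
    apply Finset.card_image_of_injOn
    intro s hs s' hs' heq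
    by_cases h0 : s i = 0 <;> by_cases h0' : s' i = 0
    · simpa [hf, h0, h0'] using heq
    · exfalso
      simp only [hf, if_pos h0, if_neg h0'] at heq
      exact hTindep s' hs' s hs i heq
    · exfalso
      simp only [hf, if_neg h0, if_pos h0'] at heq
      exact hTindep s hs s' hs' i heq.symm
    · simp only [hf, if_neg h0, if_neg h0'] at heq
      have := congrArg (fun t => t + eV i) heq
      simpa [hcancel] using this
  -- card B = 2^(d-1)
  have hBcard : B.card = 2 ^ (d - 1) := by
    have hB' : (Finset.univ.filter (fun t : Vtx d => ¬ t i = 0)).card = B.card := by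
      rw [hB]
      apply Finset.card_bij (fun t _ => t + eV i)
      · intro t ht
        rw [Finset.mem_filter] at ht ⊢
        refine ⟨Finset.mem_univ _, ?_⟩
        have h1 : t i = 1 := (hzmod (t i)).resolve_left ht.2
        rw [haddi, h1]; decide
      · intro a ha b hb heq
        have := congrArg (fun t => t + eV i) heq
        simpa [hcancel] using this
      · intro b hb
        rw [Finset.mem_filter] at hb
        refine ⟨b + eV i, ?_, hcancel b⟩
        rw [Finset.mem_filter]
        refine ⟨Finset.mem_univ _, ?_⟩
        rw [haddi, hb.2]; decide
    have htot : B.card + (Finset.univ.filter (fun t : Vtx d => ¬ t i = 0)).card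
        = 2 ^ d := by
      rw [hB, Finset.card_filter_add_card_filter_not]
      simp [Fintype.card_fun]
    rw [hB'] at htot
    have hd0 : 0 < d := Nat.pos_of_ne_zero (fun h => by subst h; exact i.elim0)
    have hd1 : d - 1 + 1 = d := Nat.succ_pred_eq_of_pos hd0
    have h2 : 2 ^ d = 2 ^ (d - 1) * 2 := by
      rw [← pow_succ, hd1]
    clear hB'
    omega
  -- the filtered set equals B \ D
  have hkey : ((Finset.univ : Finset (Vtx d)) \ T).filter
      (fun t => t i = 0 ∧ t + eV i ∈ (Finset.univ : Finset (Vtx d)) \ T) = B \ D := by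
    ext t
    constructor
    · intro ht
      rw [Finset.mem_filter, Finset.mem_sdiff] at ht
      obtain ⟨⟨-, htT⟩, ht0, hte⟩ := ht
      rw [Finset.mem_sdiff] at hte
      rw [Finset.mem_sdiff]
      refine ⟨by rw [hB, Finset.mem_filter]; exact ⟨Finset.mem_univ _, ht0⟩, ?_⟩
      rw [hDm t ht0]
      push_neg
      exact ⟨htT, hte.2⟩
    · intro ht
      rw [Finset.mem_sdiff] at ht
      obtain ⟨htB, htD⟩ := ht
      rw [hB, Finset.mem_filter] at htB
      rw [hDm t htB.2] at htD
      push_neg at htD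
      rw [Finset.mem_filter, Finset.mem_sdiff]
      exact ⟨⟨Finset.mem_univ _, htD.1⟩, htB.2,
        Finset.mem_sdiff.2 ⟨Finset.mem_univ _, htD.2⟩⟩
  have hcard : edgeCount ((Finset.univ : Finset (Vtx d)) \ T) i = B.card - D.card := by
    rw [edgeCount, hkey, Finset.card_sdiff_of_subset hDB]
  rw [hcard, hBcard, hDcard, hTcard]
  omega
end
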